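/- Let n ≥ 2, let w = x_0 x_1 … x_{2n−1} be a left preferred Gauss code on n letters, and let k ∈ {1,…,n−1}. Let m be the position with x_m = (k+1, L), and let π be the permutation of {1,…,n} sending i to i − k (mod n). Then (shift^LP)^k(w) = shift[m](π_*(w)). -/

import Mathlib

/-- A Gauss code on `n` letters: a bijection from the `2*n` positions to
letters paired with a side (`false` = L, `true` = R). -/
abbrev GaussCode (n : ℕ) := Fin (2 * n) ≃ Fin n × Bool

instance (n : ℕ) [NeZero n] : NeZero (2 * n) := ⟨by have := NeZero.ne n; omega⟩

namespace GaussCode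

variable {n : ℕ}

/-- `π_*(w)`: relabel the letters by the permutation `π`. -/
def permAct (π : Equiv.Perm (Fin n)) (w : GaussCode n) : GaussCode n :=
  w.trans (π.prodCongr (Equiv.refl Bool))

open Fin.NatCast in
/-- `shift[m](w)`: the code whose entry at position `i` is the entry of `w` at
position `i + m` (mod `2n`). -/
def shift [NeZero n] (m : ℕ) (w : GaussCode n) : GaussCode n :=
  (Equiv.addRight ((m : Fin (2 * n)))).trans w

/-- `rev(w)`: the code whose entry at position `i` is the entry of `w` at
position `2n - 1 - i`. -/
def rev (w : GaussCode n) : GaussCode n :=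
  (Fin.revPerm).trans w

/-- A Gauss code is left preferred if its `L`-entries appear in the order
`(1,L), (2,L), …, (n,L)` and its entry at position `0` is `(1,L)`. -/
def IsLeftPreferred [NeZero n] (w : GaussCode n) : Prop :=
  StrictMono (fun j : Fin n => w.symm (j, false)) ∧ w 0 = (0, false)

/-- `proj^LP(w)`: relabel letters in the order of appearance of their `L`-entries,
then rotate so that `(1,L)` is at position `0`. -/
def projLP [NeZero n] (w : GaussCode n) : GaussCode n :=
  let π : Equiv.Perm (Fin n) := (Tuple.sort (fun j : Fin n => w.symm (j, false)))⁻¹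
  let w' := permAct π w
  shift ((w'.symm ((0 : Fin n), false)).val) w'

/-- `shift^LP(w) := proj^LP(shift[1](w))`. -/
def shiftLP [NeZero n] (w : GaussCode n) : GaussCode n :=
  projLP (shift 1 w)

/-- `rev^LP(w) := proj^LP(rev(w))`. -/
def revLP [NeZero n] (w : GaussCode n) : GaussCode n :=
  projLP (rev w)

/-- The value of an entry in the order `(1,L) < (1,R) < (2,L) < (2,R) < …`. -/
def entryKey (e : Fin n × Bool) : ℕ :=
  2 * e.1.val + (if e.2 then 1 else 0)

/-- Lexicographic (strict) order on Gauss codes, comparing entries position by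
position in the order `(1,L) < (1,R) < (2,L) < (2,R) < …`. -/
def lexLt (w w' : GaussCode n) : Prop :=
  ∃ i : Fin (2 * n), (∀ k, k < i → w k = w' k) ∧ entryKey (w i) < entryKey (w' i)

/-- Lexicographic order on Gauss codes. -/
def lexLe (w w' : GaussCode n) : Prop :=
  w = w' ∨ lexLt w w'

/-- A left preferred Gauss code is left canonical if it is the smallest element
of its `shift^LP`-orbit `{w, shift^LP(w), …, (shift^LP)^{n-1}(w)}`. -/
def IsLeftCanonical [NeZero n] (w : GaussCode n) : Prop :=
  IsLeftPreferred w ∧ ∀ k < n, lexLe w (shiftLP^[k] w)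

/-- `proj^LC(w)`: the smallest element of the `shift^LP`-orbit of `proj^LP(w)`. -/
noncomputable def projLC [NeZero n] (w : GaussCode n) : GaussCode n :=
  letI := Classical.propDecidable
  if h : ∃ v : GaussCode n, (∃ k < n, v = shiftLP^[k] (projLP w)) ∧
      ∀ k < n, lexLe v (shiftLP^[k] (projLP w))
  then h.choose else projLP w

/-- `rev^LC(w) := proj^LC(rev(w))`. -/
noncomputable def revLC [NeZero n] (w : GaussCode n) : GaussCode n :=
  projLC (rev w)

/-- Oriented equivalence of Gauss codes: `w' = shift[m](π_*(w))` for some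
permutation `π` and integer `m`. -/
def OrientedEquiv [NeZero n] (w w' : GaussCode n) : Prop :=
  ∃ (π : Equiv.Perm (Fin n)) (m : ℕ), w' = shift m (permAct π w)

/-- Unoriented equivalence: `w` is orientedly equivalent to `w'` or to `rev(w')`. -/
def UnorientedEquiv [NeZero n] (w w' : GaussCode n) : Prop :=
  OrientedEquiv w w' ∨ OrientedEquiv w (rev w')

/-- A Gauss code is 1-reducible if two cyclically adjacent entries share the same letter. -/
def OneReducible [NeZero n] (w : GaussCode n) : Prop :=
  ∃ i : Fin (2 * n), (w i).1 = (w (i + 1)).1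

/-- A Gauss code is 2-reducible (cyclically, with `L = false`, `R = true`). -/
def TwoReducible [NeZero n] (w : GaussCode n) : Prop :=
  ∃ (i i' : Fin (2 * n)) (j k : Fin n), j ≠ k ∧
    ((w i = (j, false) ∧ w (i + 1) = (k, true) ∧
        w i' = (j, true) ∧ w (i' + 1) = (k, false)) ∨
     (w i = (j, false) ∧ w (i + 1) = (k, true) ∧
        w i' = (k, false) ∧ w (i' + 1) = (j, true)) ∨
     (w i = (j, true) ∧ w (i + 1) = (k, false) ∧
        w i' = (k, true) ∧ w (i' + 1) = (j, false)))

/-- A Gauss code is minimal if it is neither 1-reducible nor 2-reducible. -/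
def IsMinimal [NeZero n] (w : GaussCode n) : Prop :=
  ¬ OneReducible w ∧ ¬ TwoReducible w

/-- `σ_w`: the involution of positions sending each position to the unique other
position carrying the same letter. -/
def sigmaMap (w : GaussCode n) : Fin (2 * n) → Fin (2 * n) :=
  fun i => w.symm ((w i).1, !(w i).2)

/-- `h_w`: the side (`false` = L, `true` = R) of the entry at each position. -/
def hMap (w : GaussCode n) : Fin (2 * n) → Bool :=
  fun i => (w i).2

end GaussCode

/-! Write `p j` for the position of `(j, L)` in `w`; left preference says `p` is increasing.
By induction, `(shift^LP)^k(w) = shift[p k](π_k* w)` with `π_k = (· - k)`. Applying `shift[1]`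
moves the cut to just after `p k`, and read cyclically from there the positions `p (k+1), …,
p (n-1), p 0, …, p k` are again increasing (`StrictMono.rotate`). Hence `proj^LP` only relabels
by one more step `i ↦ i - 1` and rotates to the entry `(k+1, L)`, at position `p (k+1)`. -/

theorem StrictMono.rotate {n N : ℕ} {f : Fin n → Fin N} (hf : StrictMono f) {c : Fin n}
    {t : Fin N} (hc : ∀ j, f j < t ↔ j < c) : StrictMono fun j => f (j + c) - t := by
  have hval : ∀ j, ((f (j + c) - t : Fin N) : ℕ) =
      if j + c < c then N + f (j + c) - t else f (j + c) - t := by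
    intro j
    split_ifs with h
    · exact Fin.coe_sub_iff_lt.mpr ((hc _).mpr h)
    · exact Fin.sub_val_of_le (not_lt.mp (mt (hc _).mp h))
  have hadd : ∀ j : Fin n, ((j + c : Fin n) : ℕ) = j + c ∧ j + c < n ∨
      ((j + c : Fin n) : ℕ) + n = j + c := by
    intro j
    rw [Fin.val_add_eq_ite]
    split_ifs <;> omega
  intro i i' hii'
  have := hadd i
  have := hadd i'
  have := hf.lt_iff_lt (a := i + c) (b := i' + c)
  have := (f (i + c)).isLt
  have := t.isLt
  have := hc (i + c)
  have := hc (i' + c)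
  show (f (i + c) - t : Fin N) < f (i' + c) - t
  rw [Fin.lt_def, hval, hval]
  -- hide `(i + c).val` from `omega`, which would otherwise unfold it to `(i + c) % n`
  generalize i + c = a at *
  generalize i' + c = a' at *
  simp only [Fin.lt_def] at *
  split_ifs <;> omega

namespace GaussCode

variable {n : ℕ}

open Fin.NatCast

theorem permAct_symm_apply (π : Equiv.Perm (Fin n)) (w : GaussCode n) (e : Fin n × Bool) :
    (permAct π w).symm e = w.symm (π.symm e.1, e.2) := rfl

theorem permAct_permAct (π π' : Equiv.Perm (Fin n)) (w : GaussCode n) :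
    permAct π' (permAct π w) = permAct (π.trans π') w := rfl

theorem permAct_refl (w : GaussCode n) : permAct (Equiv.refl _) w = w := rfl

section Shift

variable [NeZero n]

@[simp]
theorem shift_apply (m : ℕ) (w : GaussCode n) (i : Fin (2 * n)) :
    shift m w i = w (i + m) := rfl

theorem shift_symm_apply (m : ℕ) (w : GaussCode n) (e : Fin n × Bool) :
    (shift m w).symm e = w.symm e - m := by
  simp [shift, sub_eq_add_neg]

theorem shift_zero (w : GaussCode n) : shift 0 w = w := by
  refine Equiv.ext fun i => ?_
  simp

theorem shift_shift (a b : ℕ) (w : GaussCode n) : shift a (shift b w) = shift (a + b) w := by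
  refine Equiv.ext fun i => ?_
  simp [add_assoc, add_comm (a : Fin (2 * n))]

theorem shift_val_sub_shift (x : Fin (2 * n)) (m : ℕ) (w : GaussCode n) :
    shift (x - m).val (shift m w) = shift x.val w := by
  refine Equiv.ext fun i => ?_
  simp [add_assoc]

theorem permAct_shift (π : Equiv.Perm (Fin n)) (m : ℕ) (w : GaussCode n) :
    permAct π (shift m w) = shift m (permAct π w) := rfl

theorem projLP_eq_of_strictMono (u : GaussCode n) (σ : Equiv.Perm (Fin n))
    (hσ : StrictMono fun j => u.symm (σ j, false)) :
    projLP u = shift (u.symm (σ 0, false)).val (permAct σ⁻¹ u) := by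
  have hsort : Tuple.sort (fun j => u.symm (j, false)) = σ :=
    ((Tuple.eq_sort_iff).mpr ⟨hσ.monotone, fun _ _ hij h => absurd (hσ.injective h) hij.ne⟩).symm
  simp only [projLP, hsort]
  rfl

theorem shiftLP_shift_permAct_subRight {w : GaussCode n}
    (hw : StrictMono fun j : Fin n => w.symm (j, false)) (j : Fin n) (hj : j.val + 1 < n) :
    shiftLP (shift (w.symm (j, false)).val (permAct (Equiv.subRight j) w)) =
      shift (w.symm (j + 1, false)).val (permAct (Equiv.subRight (j + 1)) w) := by
  set p : Fin n → Fin (2 * n) := fun i => w.symm (i, false)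
  set t : Fin (2 * n) := ((1 + (p j).val : ℕ) : Fin (2 * n))
  have hj1 : ((j + 1 : Fin n) : ℕ) = j + 1 := Fin.val_add_one_of_lt' hj
  have ht : (t : ℕ) = 1 + p j := by
    have := hw (show j < j + 1 by rw [Fin.lt_def, hj1]; omega)
    exact Fin.val_cast_of_lt (by rw [Fin.lt_def] at this; omega)
  have hsep : ∀ i, p i < t ↔ i < j + 1 := by
    intro i
    rw [Fin.lt_def, Fin.lt_def, ht, hj1, add_comm 1, Nat.lt_succ_iff, Nat.lt_succ_iff,
      ← Fin.le_def, ← Fin.le_def, hw.le_iff_le]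
  set u := shift (1 + (p j).val) (permAct (Equiv.subRight j) w)
  have hu : ∀ i, u.symm (i + 1, false) = p (i + (j + 1)) - t := by
    intro i
    simp [u, t, p, shift_symm_apply, permAct_symm_apply, add_assoc, add_comm 1 j]
  have hmono : StrictMono fun i => u.symm (Equiv.addRight 1 i, false) := by
    simpa only [Equiv.coe_addRight, hu] using hw.rotate hsep
  rw [shiftLP, shift_shift, projLP_eq_of_strictMono u _ hmono, Equiv.coe_addRight]
  beta_reduce
  rw [hu, zero_add, permAct_shift, shift_val_sub_shift, permAct_permAct]
  congr 2
  refine Equiv.ext fun i => ?_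
  simp only [Equiv.neg_addRight, Equiv.trans_apply, Equiv.subRight_apply, Equiv.coe_addRight]
  abel

end Shift

end GaussCode

open GaussCode Fin.NatCast in
theorem stmt5_general (n : ℕ) [NeZero n] (w : GaussCode n)
    (hw : IsLeftPreferred w) (k : ℕ) (hk2 : k < n) :
    shiftLP^[k] w =
      shift ((w.symm ((⟨k, hk2⟩ : Fin n), false)).val)
        (permAct (Equiv.subRight ((k : Fin n))) w) := by
  induction k with
  | zero =>
    have hw0 : w.symm (0, false) = 0 := w.symm_apply_eq.mpr hw.2.symm
    have hπ : Equiv.subRight (0 : Fin n) = Equiv.refl _ := Equiv.ext sub_zero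
    simp [hw0, shift_zero, hπ, permAct_refl]
  | succ k ih =>
    have hk : k < n := by omega
    have hsucc : (⟨k + 1, hk2⟩ : Fin n) = ⟨k, hk⟩ + 1 :=
      Fin.ext (Fin.val_add_one_of_lt' (i := ⟨k, hk⟩) hk2).symm
    have hcast : ∀ m (hm : m < n), (m : Fin n) = ⟨m, hm⟩ := fun m hm => Fin.cast_val_eq_self ⟨m, hm⟩
    rw [Function.iterate_succ_apply', ih hk, hcast k hk, hcast (k + 1) hk2, hsucc]
    exact shiftLP_shift_permAct_subRight hw.1 _ hk2

open GaussCode Fin.NatCast in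
/-- for `n ≥ 2`, a left preferred `w` and `1 ≤ k ≤ n - 1`,
`(shift^LP)^k(w) = shift[m](π_*(w))` where `m` is the position of the entry
`(k+1, L)` and `π` sends `i` to `i - k (mod n)`. -/
theorem stmt5 (n : ℕ) [NeZero n] (hn : 2 ≤ n) (w : GaussCode n)
    (hw : IsLeftPreferred w) (k : ℕ) (hk1 : 1 ≤ k) (hk2 : k < n) :
    shiftLP^[k] w =
      shift ((w.symm ((⟨k, hk2⟩ : Fin n), false)).val)
        (permAct (Equiv.subRight ((k : Fin n))) w) :=
  stmt5_general n w hw k hk2
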